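/- Let f ∈ 𝕋[x_1,…,x_n] have support S ⊆ ℕ^n and coefficients α_𝐢. For 𝐢 ∈ S, the monomial α_𝐢 x^𝐢 is essential for f if and only if there exist c ∈ ℝ^n and d ∈ ℝ such that ⟨c, 𝐢⟩ + d = π(α_𝐢) and ⟨c, 𝐣⟩ + d > π(α_𝐣) for every 𝐣 ∈ S with 𝐣 ≠ 𝐢; equivalently, iff the point (𝐢, π(α_𝐢)) ∈ ℝ^{n+1} is a vertex of the upper convex hull of the finite point set {(𝐣, π(α_𝐣)) : 𝐣 ∈ S}. (One-to-one correspondence between essential monomials of f and vertices of its essential complex.) -/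

import Mathlib

/-- The extended tropical semiring `𝕋`: tangible reals `(a, false)`,
ghost reals `(a, true)`, and `none` = `-∞`. -/
def T : Type := Option (ℝ × Bool)

namespace T

/-- The tangible element of value `a`. -/
def tang (a : ℝ) : T := some (a, false)

/-- The ghost element `a^ν` of value `a`. -/
def ghost (a : ℝ) : T := some (a, true)

/-- Tropical addition on `𝕋`. -/
noncomputable def add : T → T → T
  | none, y => y
  | some p, none => some p
  | some (a, s), some (b, t) =>
      if a < b then some (b, t) else if b < a then some (a, s) else some (a, true)

/-- Tropical multiplication on `𝕋`. -/
noncomputable def mul : T → T → T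
  | none, _ => none
  | some _, none => none
  | some (a, s), some (b, t) => some (a + b, s || t)

lemma add_assoc' : ∀ x y z : T, add (add x y) z = add x (add y z) := by
  rintro (_ | ⟨a, s⟩) (_ | ⟨b, t⟩) (_ | ⟨c, u⟩) <;>
    show @Eq (Option (ℝ × Bool)) _ _ <;>
    simp only [add] <;>
    (try by_cases h1 : a < b) <;> (try by_cases h2 : b < a) <;>
    (try by_cases h3 : b < c) <;> (try by_cases h4 : c < b) <;>
    (try by_cases h5 : a < c) <;> (try by_cases h6 : c < a) <;>
    simp only [*, ↓reduceIte] <;>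
    first
      | rfl
      | (exfalso; linarith)
      | (refine congrArg some ?_; refine Prod.ext ?_ ?_ <;>
          first | rfl | linarith | simp)

lemma add_comm' : ∀ x y : T, add x y = add y x := by
  rintro (_ | ⟨a, s⟩) (_ | ⟨b, t⟩) <;>
    show @Eq (Option (ℝ × Bool)) _ _ <;>
    simp only [add] <;>
    (try by_cases h1 : a < b) <;> (try by_cases h2 : b < a) <;>
    simp only [*, ↓reduceIte] <;>
    first
      | rfl
      | (exfalso; linarith)
      | (refine congrArg some ?_; refine Prod.ext ?_ ?_ <;>
          first | rfl | linarith | simp)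

lemma mul_assoc' : ∀ x y z : T, mul (mul x y) z = mul x (mul y z) := by
  rintro (_ | ⟨a, s⟩) (_ | ⟨b, t⟩) (_ | ⟨c, u⟩) <;>
    show @Eq (Option (ℝ × Bool)) _ _ <;>
    simp [mul, add_assoc, Bool.or_assoc]

lemma mul_comm' : ∀ x y : T, mul x y = mul y x := by
  rintro (_ | ⟨a, s⟩) (_ | ⟨b, t⟩) <;> show @Eq (Option (ℝ × Bool)) _ _ <;>
    simp [mul, add_comm, Bool.or_comm]

lemma left_distrib' : ∀ x y z : T, mul x (add y z) = add (mul x y) (mul x z) := by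
  rintro (_ | ⟨a, s⟩) (_ | ⟨b, t⟩) (_ | ⟨c, u⟩) <;>
    show @Eq (Option (ℝ × Bool)) _ _ <;>
    simp only [add, mul] <;>
    (try by_cases h3 : b < c) <;> (try by_cases h4 : c < b) <;>
    simp only [*, ↓reduceIte, add_lt_add_iff_left] <;>
    first
      | rfl
      | (exfalso; linarith)
      | (refine congrArg some ?_; refine Prod.ext ?_ ?_ <;>
          first | rfl | linarith | simp)

noncomputable instance : Zero T := ⟨none⟩
noncomputable instance : One T := ⟨some (0, false)⟩
noncomputable instance : Add T := ⟨add⟩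
noncomputable instance : Mul T := ⟨mul⟩

noncomputable instance : CommSemiring T where
  add := (· + ·)
  zero := 0
  add_assoc := add_assoc'
  zero_add := fun x => by cases x <;> rfl
  add_zero := fun x => by cases x <;> rfl
  add_comm := add_comm'
  mul := (· * ·)
  one := 1
  mul_assoc := mul_assoc'
  one_mul := fun x => by
    show mul (some (0, false)) x = x
    rcases x with _ | ⟨a, s⟩ <;> show @Eq (Option (ℝ × Bool)) _ _ <;> simp [mul]
  mul_one := fun x => by
    show mul x (some (0, false)) = x
    rcases x with _ | ⟨a, s⟩ <;> show @Eq (Option (ℝ × Bool)) _ _ <;> simp [mul]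
  mul_comm := mul_comm'
  zero_mul := fun x => by cases x <;> rfl
  mul_zero := fun x => by cases x <;> rfl
  left_distrib := left_distrib'
  right_distrib := fun x y z => by
    show mul (add x y) z = add (mul x z) (mul y z)
    rw [mul_comm', left_distrib', mul_comm' z x, mul_comm' z y]
  nsmul := nsmulRec

/-- Membership in the ghost part `𝕌̄ = 𝕌 ∪ {-∞}` of `𝕋`. -/
def isGhost : T → Prop
  | none => True
  | some (_, s) => s = true

/-- Membership in the tangible part `ℝ ∪ {-∞}` of `𝕋`. -/
def isTangible : T → Prop
  | none => True
  | some (_, s) => s = false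

/-- The underlying real value (junk value `0` at `-∞`); this is `π` on elements `≠ -∞`. -/
def val : T → ℝ
  | none => 0
  | some (a, _) => a

/-- The ghost map `ν`. -/
def nu : T → T
  | none => none
  | some (a, _) => some (a, true)

end T

namespace T

/-- The model value in the half line `[0,∞)`: `-∞ ↦ 0`, an element of value `a ↦ exp a`. -/
noncomputable def gval : T → ℝ
  | none => 0
  | some (a, _) => Real.exp a

lemma nu_isGhost : ∀ x : T, isGhost (nu x)
  | none => trivial
  | some (_, _) => rfl

lemma gval_injOn_tang : Set.InjOn gval {x : T | isTangible x} := by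
  rintro (_ | ⟨a, s⟩) hx (_ | ⟨b, t⟩) hy h <;>
    simp only [gval, Set.mem_setOf_eq, isTangible] at hx hy h
  · rfl
  · exact absurd h.symm (Real.exp_pos b).ne'
  · exact absurd h (Real.exp_pos a).ne'
  · rw [Real.exp_eq_exp] at h; subst hx; subst hy; subst h; rfl

lemma gval_injOn_ghost : Set.InjOn gval {x : T | isGhost x} := by
  rintro (_ | ⟨a, s⟩) hx (_ | ⟨b, t⟩) hy h <;>
    simp only [gval, Set.mem_setOf_eq, isGhost] at hx hy h
  · rfl
  · exact absurd h.symm (Real.exp_pos b).ne'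
  · exact absurd h (Real.exp_pos a).ne'
  · rw [Real.exp_eq_exp] at h; subst hx; subst hy; subst h; rfl

lemma gval_image_tang : gval '' {x : T | isTangible x} = Set.Ici 0 := by
  ext y
  constructor
  · rintro ⟨(_ | ⟨a, s⟩), hx, rfl⟩
    · exact Set.self_mem_Ici
    · exact le_of_lt (by simpa [gval] using Real.exp_pos a)
  · intro hy
    rcases eq_or_lt_of_le (Set.mem_Ici.mp hy : (0 : ℝ) ≤ y) with h | h
    · exact ⟨none, trivial, h⟩
    · exact ⟨some (Real.log y, false), rfl, by simp [gval, Real.exp_log h]⟩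

lemma gval_image_ghost : gval '' {x : T | isGhost x} = Set.Ici 0 := by
  ext y
  constructor
  · rintro ⟨(_ | ⟨a, s⟩), hx, rfl⟩
    · exact Set.self_mem_Ici
    · exact le_of_lt (by simpa [gval] using Real.exp_pos a)
  · intro hy
    rcases eq_or_lt_of_le (Set.mem_Ici.mp hy : (0 : ℝ) ≤ y) with h | h
    · exact ⟨none, trivial, h⟩
    · exact ⟨some (Real.log y, true), rfl, by simp [gval, Real.exp_log h]⟩

/-- The closed sets of the topology on `𝕋`: both the tangible and the ghost layers are
closed in the model `[0,∞)` of `𝕌̄`, and the ghost image of the tangible layer is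
contained in the set. -/
def TIsClosed (W : Set T) : Prop :=
  IsClosed (gval '' (W ∩ {x | isTangible x})) ∧
  IsClosed (gval '' (W ∩ {x | isGhost x})) ∧
  nu '' (W ∩ {x | isTangible x}) ⊆ W ∩ {x | isGhost x}

/-- The topology on `𝕋`. -/
noncomputable instance : TopologicalSpace T :=
  TopologicalSpace.ofClosed {W | TIsClosed W}
    (by
      refine ⟨?_, ?_, ?_⟩ <;> simp [TIsClosed])
    (fun A hA => by
      rcases A.eq_empty_or_nonempty with rfl | hne
      · rw [Set.sInter_empty]
        refine ⟨?_, ?_, ?_⟩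
        · rw [Set.univ_inter, gval_image_tang]; exact isClosed_Ici
        · rw [Set.univ_inter, gval_image_ghost]; exact isClosed_Ici
        · rintro y ⟨x, ⟨-, _⟩, rfl⟩
          exact ⟨trivial, nu_isGhost x⟩
      · have : Nonempty A := hne.to_subtype
        have h1 : (⋂₀ A) ∩ {x : T | isTangible x}
            = ⋂ (W : A), ((W : Set T) ∩ {x | isTangible x}) := by
          ext x
          simp only [Set.mem_inter_iff, Set.mem_sInter, Set.mem_iInter, Set.mem_setOf_eq]
          constructor
          · rintro ⟨h, ht⟩ W; exact ⟨h W W.2, ht⟩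
          · intro h
            obtain ⟨W, hW⟩ := hne
            exact ⟨fun V hV => (h ⟨V, hV⟩).1, (h ⟨W, hW⟩).2⟩
        have h2 : (⋂₀ A) ∩ {x : T | isGhost x}
            = ⋂ (W : A), ((W : Set T) ∩ {x | isGhost x}) := by
          ext x
          simp only [Set.mem_inter_iff, Set.mem_sInter, Set.mem_iInter, Set.mem_setOf_eq]
          constructor
          · rintro ⟨h, ht⟩ W; exact ⟨h W W.2, ht⟩
          · intro h
            obtain ⟨W, hW⟩ := hne
            exact ⟨fun V hV => (h ⟨V, hV⟩).1, (h ⟨W, hW⟩).2⟩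
        refine ⟨?_, ?_, ?_⟩
        · rw [h1, Set.InjOn.image_iInter_eq
            (gval_injOn_tang.mono (Set.iUnion_subset fun W => Set.inter_subset_right))]
          exact isClosed_iInter fun W => (hA W.2).1
        · rw [h2, Set.InjOn.image_iInter_eq
            (gval_injOn_ghost.mono (Set.iUnion_subset fun W => Set.inter_subset_right))]
          exact isClosed_iInter fun W => (hA W.2).2.1
        · rintro y ⟨x, ⟨hx, hxt⟩, rfl⟩
          refine ⟨fun W hW => ((hA hW).2.2 ⟨x, ⟨hx W hW, hxt⟩, rfl⟩).1, nu_isGhost x⟩)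
    (fun A hA B hB => by
      have h1 : (A ∪ B) ∩ {x : T | isTangible x}
          = (A ∩ {x | isTangible x}) ∪ (B ∩ {x | isTangible x}) :=
        Set.union_inter_distrib_right A B _
      have h2 : (A ∪ B) ∩ {x : T | isGhost x}
          = (A ∩ {x | isGhost x}) ∪ (B ∩ {x | isGhost x}) :=
        Set.union_inter_distrib_right A B _
      refine ⟨?_, ?_, ?_⟩
      · rw [h1, Set.image_union]; exact hA.1.union hB.1
      · rw [h2, Set.image_union]; exact hA.2.1.union hB.2.1
      · rintro y ⟨x, ⟨hx, hxt⟩, rfl⟩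
        rcases hx with hxA | hxB
        · have h := hA.2.2 ⟨x, ⟨hxA, hxt⟩, rfl⟩
          exact ⟨Or.inl h.1, h.2⟩
        · have h := hB.2.2 ⟨x, ⟨hxB, hxt⟩, rfl⟩
          exact ⟨Or.inr h.1, h.2⟩)

end T

namespace T

/-- `f` dominates `g` if `f ⊕ g` and `f` agree as functions. -/
def Dominates {n : ℕ} (f g : MvPolynomial (Fin n) T) : Prop :=
  ∀ a : Fin n → T, MvPolynomial.eval a f + MvPolynomial.eval a g = MvPolynomial.eval a f

/-- The polynomial obtained from `f` by deleting the monomial with exponent `i`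
(setting its coefficient to `-∞`). -/
noncomputable def removeMono {n : ℕ} (i : Fin n →₀ ℕ) (f : MvPolynomial (Fin n) T) :
    MvPolynomial (Fin n) T :=
  ∑ j ∈ f.support.erase i, MvPolynomial.monomial j (MvPolynomial.coeff j f)

/-- The monomial of `f` with exponent `i` is essential. -/
def Essential {n : ℕ} (f : MvPolynomial (Fin n) T) (i : Fin n →₀ ℕ) : Prop :=
  i ∈ f.support ∧
    ¬ Dominates (removeMono i f) (MvPolynomial.monomial i (MvPolynomial.coeff i f))

open Classical in
/-- The essential part `f^e` of `f`: the sum of the essential monomials of `f`. -/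
noncomputable def essentialPart {n : ℕ} (f : MvPolynomial (Fin n) T) :
    MvPolynomial (Fin n) T :=
  ∑ i ∈ f.support,
    if Essential f i then MvPolynomial.monomial i (MvPolynomial.coeff i f) else 0

end T

/-!
Under `π` the monomial `α_j x^j` evaluated at `a` becomes the affine function
`π(α_j) + ⟨j, π(a)⟩` of `π(a)`. If at a tangible point `a = (w_t)` all other monomials are
strictly below the `i`-th one, then adding `α_i x^i` changes the value of the rest of `f`; such a
`w` is the same as a supporting affine function (`w = -c`). Conversely, if adding `α_i x^i`
changes the value at some `a`, then all other monomials are at most as large as it and at most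
one of them ties, because two equal summands add up to a ghost that absorbs `α_i a^i`. Replacing
the `-∞` coordinates of `π(a)` by a very negative real, and then moving slightly in the direction
`i - j₀` of the tie, gives a real `w` at which the `i`-th monomial wins strictly.
-/

namespace T

/-- `π` with values in `WithBot ℝ`: unlike `val`, it sends `-∞` to `⊥`, so that it turns `+`
into `max` and `*` into `+`. -/
def proj : T → WithBot ℝ
  | none => ⊥
  | some (a, _) => a

@[simp]
lemma proj_eq_bot_iff {x : T} : proj x = ⊥ ↔ x = 0 := by
  rcases x with _ | ⟨a, s⟩
  · exact iff_of_true rfl rfl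
  · exact iff_of_false WithBot.coe_ne_bot (Option.some_ne_none _)

lemma proj_of_ne_zero {x : T} (hx : x ≠ 0) : proj x = val x := by
  rcases x with _ | ⟨a, s⟩
  · exact absurd rfl hx
  · rfl

lemma proj_mul (x y : T) : proj (x * y) = proj x + proj y := by
  rcases x with _ | ⟨a, s⟩ <;> rcases y with _ | ⟨b, t⟩
  · rfl
  · rfl
  · exact (WithBot.add_bot _).symm
  · exact WithBot.coe_add a b

lemma proj_pow (x : T) (k : ℕ) : proj (x ^ k) = k • proj x := by
  induction k with
  | zero => rw [pow_zero, zero_smul]; rfl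
  | succ k ih => rw [pow_succ, proj_mul, ih, succ_nsmul]

lemma proj_prod {ι : Type*} (s : Finset ι) (g : ι → T) :
    proj (∏ k ∈ s, g k) = ∑ k ∈ s, proj (g k) := by
  classical
  induction s using Finset.induction_on with
  | empty => rfl
  | insert k s hk ih => rw [Finset.prod_insert hk, Finset.sum_insert hk, proj_mul, ih]

lemma add_eq_left_of_proj_lt {x y : T} (h : proj y < proj x) : x + y = x := by
  rcases x with _ | ⟨a, s⟩
  · exact absurd h not_lt_bot
  rcases y with _ | ⟨b, t⟩
  · rfl
  have hba : b < a := WithBot.coe_lt_coe.1 h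
  change add _ _ = _
  simp only [add, hba.not_gt, hba, ↓reduceIte]
  rfl

lemma add_eq_right_of_proj_lt {x y : T} (h : proj x < proj y) : x + y = y := by
  rw [add_comm, add_eq_left_of_proj_lt h]

lemma add_eq_nu_of_proj_eq {x y : T} (h : proj x = proj y) : x + y = nu x := by
  rcases x with _ | ⟨a, s⟩ <;> rcases y with _ | ⟨b, t⟩
  · rfl
  · exact absurd h.symm (by simp [proj])
  · exact absurd h (by simp [proj])
  · obtain rfl : a = b := WithBot.coe_injective h
    change add _ _ = _
    simp only [add, lt_irrefl, ↓reduceIte]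
    rfl

lemma proj_nu (x : T) : proj (nu x) = proj x := by
  rcases x with _ | ⟨a, s⟩ <;> rfl

lemma proj_add (x y : T) : proj (x + y) = max (proj x) (proj y) := by
  rcases lt_trichotomy (proj x) (proj y) with h | h | h
  · rw [add_eq_right_of_proj_lt h, max_eq_right h.le]
  · rw [add_eq_nu_of_proj_eq h, proj_nu, h, max_self]
  · rw [add_eq_left_of_proj_lt h, max_eq_left h.le]

lemma proj_sum {ι : Type*} (s : Finset ι) (g : ι → T) :
    proj (∑ k ∈ s, g k) = s.sup fun k => proj (g k) := by
  classical
  induction s using Finset.induction_on with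
  | empty => rfl
  | insert k s hk ih => rw [Finset.sum_insert hk, Finset.sup_insert, proj_add, ih]

lemma nu_eq_self_iff {x : T} : nu x = x ↔ isGhost x := by
  rcases x with _ | ⟨a, s⟩
  · exact iff_of_true rfl trivial
  · cases s
    · exact iff_of_false nofun nofun
    · exact iff_of_true rfl rfl

lemma proj_le_proj_sum {ι : Type*} {s : Finset ι} (g : ι → T) {k : ι} (hk : k ∈ s) :
    proj (g k) ≤ proj (∑ k ∈ s, g k) := by
  rw [proj_sum]
  exact Finset.le_sup (f := fun k => proj (g k)) hk

lemma add_ne_left_of_proj_lt {x y : T} (h : proj x < proj y) : x + y ≠ x := by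
  rw [add_eq_right_of_proj_lt h]
  exact fun hyx => h.ne' (congrArg proj hyx)

/-- Two summands of equal value would add up to a ghost. -/
lemma exists_proj_lt_of_not_isGhost_sum {ι : Type*} (s : Finset ι) (g : ι → T)
    (h : ¬ isGhost (∑ k ∈ s, g k)) :
    ∃ k₀ ∈ s, proj (g k₀) = proj (∑ k ∈ s, g k) ∧
      ∀ k ∈ s, k ≠ k₀ → proj (g k) < proj (∑ k ∈ s, g k) := by
  classical
  induction s using Finset.induction_on with
  | empty => exact absurd trivial h
  | insert k s hk ih =>
    rw [Finset.sum_insert hk] at h ⊢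
    rcases lt_trichotomy (proj (g k)) (proj (∑ k ∈ s, g k)) with hlt | heq | hgt
    · rw [add_eq_right_of_proj_lt hlt] at h ⊢
      obtain ⟨k₀, hk₀, heq₀, hlt₀⟩ := ih h
      refine ⟨k₀, Finset.mem_insert_of_mem hk₀, heq₀, fun k' hk' hne => ?_⟩
      rcases Finset.mem_insert.1 hk' with rfl | hk'
      · exact hlt
      · exact hlt₀ k' hk' hne
    · rw [add_eq_nu_of_proj_eq heq] at h
      exact absurd (nu_isGhost _) h
    · rw [add_eq_left_of_proj_lt hgt]
      refine ⟨k, Finset.mem_insert_self k s, rfl, fun k' hk' hne => ?_⟩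
      exact (proj_le_proj_sum g ((Finset.mem_insert.1 hk').resolve_left hne)).trans_lt hgt

lemma proj_lt_or_unique_tie_of_sum_add_ne {ι : Type*} {s : Finset ι} {g : ι → T} {y : T}
    (h : ∑ k ∈ s, g k + y ≠ ∑ k ∈ s, g k) :
    y ≠ 0 ∧ ((∀ k ∈ s, proj (g k) < proj y) ∨
      ∃ k₀ ∈ s, proj (g k₀) = proj y ∧ ∀ k ∈ s, k ≠ k₀ → proj (g k) < proj y) := by
  have hy : y ≠ 0 := by
    rintro rfl
    exact h (add_zero _)
  refine ⟨hy, ?_⟩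
  rcases lt_trichotomy (proj (∑ k ∈ s, g k)) (proj y) with hlt | heq | hgt
  · exact Or.inl fun k hk => (proj_le_proj_sum g hk).trans_lt hlt
  · have hng : ¬ isGhost (∑ k ∈ s, g k) := fun hg =>
      h (by rw [add_eq_nu_of_proj_eq heq, nu_eq_self_iff.2 hg])
    obtain ⟨k₀, hk₀, heq₀, hlt₀⟩ := exists_proj_lt_of_not_isGhost_sum s g hng
    exact Or.inr ⟨k₀, hk₀, heq₀.trans heq, fun k hk hne => heq ▸ hlt₀ k hk hne⟩
  · exact absurd (add_eq_left_of_proj_lt hgt) h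

end T

open Filter Topology

section RealPoints

variable {ι m : Type*} [Fintype m]

lemma WithBot.nsmul_eq_bot_iff {α : Type*} [AddMonoid α] {k : ℕ} {y : WithBot α} :
    k • y = ⊥ ↔ k ≠ 0 ∧ y = ⊥ := by
  induction y using WithBot.recBotCoe with
  | bot =>
    cases k with
    | zero => simp
    | succ k => simp [succ_nsmul]
  | coe r =>
    rw [← WithBot.coe_nsmul]
    exact iff_of_false WithBot.coe_ne_bot fun h => WithBot.coe_ne_bot h.2

lemma sum_nsmul_coe (e : m → ℕ) (w : m → ℝ) :
    ∑ t, e t • (w t : WithBot ℝ) = ↑(w ⬝ᵥ fun t => (e t : ℝ)) := by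
  simp [dotProduct, ← WithBot.coe_nsmul, nsmul_eq_mul, mul_comm]

lemma sum_nsmul_eq_coe_of_ne_bot {e : m → ℕ} {x : m → WithBot ℝ} (h : ∑ t, e t • x t ≠ ⊥)
    (M : ℝ) : ∑ t, e t • x t = ↑((fun t => (x t).unbotD M) ⬝ᵥ fun t => (e t : ℝ)) := by
  rw [← sum_nsmul_coe]
  refine Finset.sum_congr rfl fun t _ => ?_
  by_cases he : e t = 0
  · simp [he]
  have hx : x t ≠ ⊥ := fun hx =>
    h (WithBot.sum_eq_bot_iff.2 ⟨t, Finset.mem_univ t, WithBot.nsmul_eq_bot_iff.2 ⟨he, hx⟩⟩)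
  obtain ⟨r, hr⟩ := WithBot.ne_bot_iff_exists.1 hx
  rw [← hr]
  rfl

lemma tendsto_dotProduct_unbotD_atBot {e : m → ℕ} {x : m → WithBot ℝ}
    (h : ∑ t, e t • x t = ⊥) :
    Tendsto (fun M => (fun t => (x t).unbotD M) ⬝ᵥ fun t => (e t : ℝ)) atBot atBot := by
  classical
  obtain ⟨t₀, -, ht₀⟩ := WithBot.sum_eq_bot_iff.1 h
  rw [WithBot.nsmul_eq_bot_iff] at ht₀
  set b : m → ℝ := fun t => if x t = ⊥ then 1 else 0
  have hsplit : ∀ M : ℝ, (fun t => (x t).unbotD M) = (fun t => (x t).unbotD 0) + M • b := by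
    intro M
    funext t
    by_cases hx : x t = ⊥
    · simp [b, hx]
    · obtain ⟨r, hr⟩ := WithBot.ne_bot_iff_exists.1 hx
      simp [b, ← hr]
  have hb : 0 < b ⬝ᵥ fun t => (e t : ℝ) := by
    refine Finset.sum_pos' (fun t _ => by positivity) ⟨t₀, Finset.mem_univ t₀, ?_⟩
    simp [b, ht₀.2, Nat.pos_of_ne_zero ht₀.1]
  have hlin : ∀ M : ℝ, (fun t => (x t).unbotD M) ⬝ᵥ (fun t => (e t : ℝ)) =
      (fun t => (x t).unbotD 0) ⬝ᵥ (fun t => (e t : ℝ)) + M * b ⬝ᵥ fun t => (e t : ℝ) := by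
    intro M
    rw [hsplit M, add_dotProduct, smul_dotProduct, smul_eq_mul]
  exact (tendsto_atBot_add_const_left _ _ (tendsto_id.atBot_mul_const hb)).congr
    fun M => (hlin M).symm

/-- The `-∞` coordinates of `x` are replaced by a very negative real `M`: forms that are `⊥` at `x`
then become arbitrarily small, while the others keep their values. -/
lemma exists_real_point_preserving_order (S : Finset ι) (e : ι → m → ℕ) (p : ι → ℝ)
    (x : m → WithBot ℝ) {i : ι} (hi : ∑ t, e i t • x t ≠ ⊥) :
    ∃ w : m → ℝ, ∀ j ∈ S,
      ((p j : WithBot ℝ) + ∑ t, e j t • x t < p i + ∑ t, e i t • x t →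
        p j + w ⬝ᵥ (fun t => (e j t : ℝ)) < p i + w ⬝ᵥ fun t => (e i t : ℝ)) ∧
      ((p j : WithBot ℝ) + ∑ t, e j t • x t ≤ p i + ∑ t, e i t • x t →
        p j + w ⬝ᵥ (fun t => (e j t : ℝ)) ≤ p i + w ⬝ᵥ fun t => (e i t : ℝ)) := by
  set w : ℝ → m → ℝ := fun M t => (x t).unbotD M
  have hcoe : ∀ j, ∑ t, e j t • x t ≠ ⊥ → ∀ M, (p j : WithBot ℝ) + ∑ t, e j t • x t =
      ↑(p j + w M ⬝ᵥ fun t => (e j t : ℝ)) := fun j hj M => by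
    rw [sum_nsmul_eq_coe_of_ne_bot hj M, WithBot.coe_add]
  have hev : ∀ j ∈ S, ∀ᶠ M in atBot,
      ((p j : WithBot ℝ) + ∑ t, e j t • x t < p i + ∑ t, e i t • x t →
        p j + w M ⬝ᵥ (fun t => (e j t : ℝ)) < p i + w M ⬝ᵥ fun t => (e i t : ℝ)) ∧
      ((p j : WithBot ℝ) + ∑ t, e j t • x t ≤ p i + ∑ t, e i t • x t →
        p j + w M ⬝ᵥ (fun t => (e j t : ℝ)) ≤ p i + w M ⬝ᵥ fun t => (e i t : ℝ)) := by
    intro j _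
    by_cases hj : ∑ t, e j t • x t = ⊥
    · have hi_const : ∀ M, w M ⬝ᵥ (fun t => (e i t : ℝ)) = w 0 ⬝ᵥ fun t => (e i t : ℝ) :=
        fun M => WithBot.coe_injective <| by
          rw [← sum_nsmul_eq_coe_of_ne_bot hi, ← sum_nsmul_eq_coe_of_ne_bot hi]
      filter_upwards [(tendsto_dotProduct_unbotD_atBot hj).eventually_lt_atBot
        (p i + w 0 ⬝ᵥ (fun t => (e i t : ℝ)) - p j)] with M hM
      have hlt : p j + w M ⬝ᵥ (fun t => (e j t : ℝ)) < p i + w M ⬝ᵥ fun t => (e i t : ℝ) := by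
        rw [hi_const M]
        linarith
      exact ⟨fun _ => hlt, fun _ => hlt.le⟩
    · refine Eventually.of_forall fun M => ?_
      rw [hcoe j hj M, hcoe i hi M, WithBot.coe_lt_coe, WithBot.coe_le_coe]
      exact ⟨id, id⟩
  obtain ⟨M, hM⟩ := ((eventually_all_finset S).2 hev).exists
  exact ⟨w M, hM⟩

/-- A single tie is broken by moving `w` in the direction `v i - v j₀`, which favours `i` over
`j₀` and is harmless for the other, strict, inequalities when the step is small. -/
lemma exists_strict_of_unique_tie {v : ι → m → ℝ} (hv : Function.Injective v) (p : ι → ℝ)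
    (S : Finset ι) {i j₀ : ι} {w : m → ℝ} (hle : p j₀ + w ⬝ᵥ v j₀ ≤ p i + w ⬝ᵥ v i)
    (hlt : ∀ j ∈ S, j ≠ i → j ≠ j₀ → p j + w ⬝ᵥ v j < p i + w ⬝ᵥ v i) :
    ∃ w' : m → ℝ, ∀ j ∈ S, j ≠ i → p j + w' ⬝ᵥ v j < p i + w' ⬝ᵥ v i := by
  by_cases hj₀ : j₀ = i
  · exact ⟨w, fun j hj hji => hlt j hj hji (hj₀ ▸ hji)⟩
  set d := v i - v j₀
  have hd : 0 < d ⬝ᵥ d := lt_of_le_of_ne (Finset.sum_nonneg fun t _ => mul_self_nonneg (d t))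
    (Ne.symm (dotProduct_self_eq_zero.not.2 (sub_ne_zero.2 (hv.ne (Ne.symm hj₀)))))
  have hmove : ∀ (ε : ℝ) (j : ι),
      p j + (w + ε • d) ⬝ᵥ v j = p j + w ⬝ᵥ v j + ε * d ⬝ᵥ v j := fun ε j => by
    rw [add_dotProduct, smul_dotProduct, smul_eq_mul, add_assoc]
  have hev : ∀ᶠ ε in 𝓝[>] (0 : ℝ), ∀ j ∈ S, j ≠ i →
      p j + (w + ε • d) ⬝ᵥ v j < p i + (w + ε • d) ⬝ᵥ v i := by
    refine (eventually_all_finset S).2 fun j hj => ?_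
    by_cases hji : j = i
    · exact Eventually.of_forall fun _ hne => absurd hji hne
    by_cases hjj₀ : j = j₀
    · filter_upwards [self_mem_nhdsWithin] with ε (hε : 0 < ε) _
      have hdd : d ⬝ᵥ v i - d ⬝ᵥ v j₀ = d ⬝ᵥ d := (dotProduct_sub d _ _).symm
      rw [hjj₀, hmove, hmove]
      nlinarith [mul_pos hε hd]
    · have hnear : ∀ᶠ ε in 𝓝 (0 : ℝ), p j + w ⬝ᵥ v j + ε * d ⬝ᵥ v j <
          p i + w ⬝ᵥ v i + ε * d ⬝ᵥ v i :=
        ContinuousAt.eventually_lt (by fun_prop) (by fun_prop)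
          (by simpa using hlt j hj hji hjj₀)
      filter_upwards [hnear.filter_mono nhdsWithin_le_nhds] with ε hε _
      rwa [hmove, hmove]
  obtain ⟨ε, hε⟩ := hev.exists
  exact ⟨w + ε • d, hε⟩

lemma exists_affine_iff_exists_strict_max (S : Finset ι) (v : ι → m → ℝ) (p : ι → ℝ) (i : ι) :
    (∃ (c : m → ℝ) (d : ℝ), c ⬝ᵥ v i + d = p i ∧ ∀ j ∈ S, j ≠ i → c ⬝ᵥ v j + d > p j) ↔
      ∃ w : m → ℝ, ∀ j ∈ S, j ≠ i → p j + w ⬝ᵥ v j < p i + w ⬝ᵥ v i := by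
  constructor
  · rintro ⟨c, d, hi, hlt⟩
    refine ⟨-c, fun j hj hji => ?_⟩
    have := hlt j hj hji
    simp only [neg_dotProduct]
    linarith
  · rintro ⟨w, hw⟩
    refine ⟨-w, p i + w ⬝ᵥ v i, by rw [neg_dotProduct]; ring, fun j hj hji => ?_⟩
    have := hw j hj hji
    rw [neg_dotProduct]
    linarith

end RealPoints

namespace T

open MvPolynomial

variable {n : ℕ}

lemma eval_removeMono (a : Fin n → T) (i : Fin n →₀ ℕ) (f : MvPolynomial (Fin n) T) :
    eval a (removeMono i f) = ∑ j ∈ f.support.erase i, eval a (monomial j (coeff j f)) :=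
  map_sum _ _ _

lemma proj_eval_monomial (a : Fin n → T) (j : Fin n →₀ ℕ) (α : T) :
    proj (eval a (monomial j α)) = proj α + ∑ t, j t • proj (a t) := by
  simp_rw [eval_monomial, Finsupp.prod_pow, proj_mul, proj_prod, proj_pow]

lemma proj_eval_monomial_coeff (a : Fin n → T) {f : MvPolynomial (Fin n) T} {j : Fin n →₀ ℕ}
    (hj : j ∈ f.support) :
    proj (eval a (monomial j (coeff j f))) = val (coeff j f) + ∑ t, j t • proj (a t) := by
  rw [proj_eval_monomial, proj_of_ne_zero (mem_support_iff.1 hj)]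

lemma essential_of_strict_max {f : MvPolynomial (Fin n) T} {i : Fin n →₀ ℕ} (hi : i ∈ f.support)
    {w : Fin n → ℝ} (hw : ∀ j ∈ f.support, j ≠ i →
      val (coeff j f) + w ⬝ᵥ (fun t => (j t : ℝ)) < val (coeff i f) + w ⬝ᵥ fun t => (i t : ℝ)) :
    Essential f i := by
  refine ⟨hi, fun hdom => ?_⟩
  have hproj : ∀ j ∈ f.support, proj (eval (fun t => tang (w t)) (monomial j (coeff j f))) =
      ↑(val (coeff j f) + w ⬝ᵥ fun t => (j t : ℝ)) := fun j hj => by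
    rw [proj_eval_monomial_coeff _ hj, WithBot.coe_add, ← sum_nsmul_coe]
    rfl
  have hnd := hdom fun t => tang (w t)
  rw [eval_removeMono] at hnd
  refine add_ne_left_of_proj_lt ?_ hnd
  rw [proj_sum, hproj i hi, Finset.sup_lt_iff (WithBot.bot_lt_coe _)]
  intro j hj
  rw [hproj j (Finset.mem_of_mem_erase hj), WithBot.coe_lt_coe]
  exact hw j (Finset.mem_of_mem_erase hj) (Finset.ne_of_mem_erase hj)

lemma exists_strict_max_of_essential {f : MvPolynomial (Fin n) T} {i : Fin n →₀ ℕ}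
    (h : Essential f i) : ∃ w : Fin n → ℝ, ∀ j ∈ f.support, j ≠ i →
      val (coeff j f) + w ⬝ᵥ (fun t => (j t : ℝ)) < val (coeff i f) + w ⬝ᵥ fun t => (i t : ℝ) := by
  obtain ⟨hi, hnd⟩ := h
  obtain ⟨a, ha⟩ := not_forall.1 hnd
  rw [eval_removeMono] at ha
  obtain ⟨hm, hcases⟩ := proj_lt_or_unique_tie_of_sum_add_ne ha
  have hℓ := fun j (hj : j ∈ f.support) => proj_eval_monomial_coeff a hj
  have hi_ne_bot : ∑ t, i t • proj (a t) ≠ ⊥ := fun h =>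
    hm (proj_eq_bot_iff.1 (by rw [hℓ i hi, h, WithBot.add_bot]))
  obtain ⟨w, hw⟩ := exists_real_point_preserving_order f.support (fun j => ⇑j)
    (fun j => val (coeff j f)) (fun t => proj (a t)) hi_ne_bot
  rcases hcases with hlt | ⟨j₀, hj₀, heq, hlt⟩
  · refine ⟨w, fun j hj hji => (hw j hj).1 ?_⟩
    rw [← hℓ j hj, ← hℓ i hi]
    exact hlt j (Finset.mem_erase.2 ⟨hji, hj⟩)
  · have hinj : Function.Injective fun (j : Fin n →₀ ℕ) (t : Fin n) => (j t : ℝ) :=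
      fun j j' h => Finsupp.ext fun t => Nat.cast_injective (congrFun h t)
    refine exists_strict_of_unique_tie hinj _ f.support (j₀ := j₀)
      ((hw j₀ (Finset.mem_of_mem_erase hj₀)).2 ?_) fun j hj hji hjj₀ => (hw j hj).1 ?_
    · rw [← hℓ j₀ (Finset.mem_of_mem_erase hj₀), ← hℓ i hi]
      exact heq.le
    · rw [← hℓ j hj, ← hℓ i hi]
      exact hlt j (Finset.mem_erase.2 ⟨hji, hj⟩) hjj₀

lemma essential_iff_exists_strict_max {f : MvPolynomial (Fin n) T} {i : Fin n →₀ ℕ}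
    (hi : i ∈ f.support) : Essential f i ↔ ∃ w : Fin n → ℝ, ∀ j ∈ f.support, j ≠ i →
      val (coeff j f) + w ⬝ᵥ (fun t => (j t : ℝ)) < val (coeff i f) + w ⬝ᵥ fun t => (i t : ℝ) :=
  ⟨exists_strict_max_of_essential, fun ⟨_, hw⟩ => essential_of_strict_max hi hw⟩

end T

/-- a monomial of `f` (with exponent `i` in the support) is essential
iff the point `(i, π(α_i))` is a vertex of the upper convex hull of the points
`(j, π(α_j))`, `j ∈ Supp f`, i.e. iff some affine functional `c ⋅ x + d` touches the
configuration exactly at `i` from below. -/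
theorem tropical_essential_iff_vertex (n : ℕ) (f : MvPolynomial (Fin n) T)
    (i : Fin n →₀ ℕ) (hi : i ∈ f.support) :
    T.Essential f i ↔
      ∃ (c : Fin n → ℝ) (d : ℝ),
        (∑ t, c t * (i t : ℝ)) + d = T.val (MvPolynomial.coeff i f) ∧
        ∀ j ∈ f.support, j ≠ i →
          (∑ t, c t * (j t : ℝ)) + d > T.val (MvPolynomial.coeff j f) :=
  (T.essential_iff_exists_strict_max hi).trans (exists_affine_iff_exists_strict_max _ _ _ i).symm
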